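/- arXiv:2408.15730 — 2 statements merged into one kernel-verified Lean document; each statement's English description precedes it below -/
import Mathlib

section
/- Let S ⊂ ℝ² be the unit circle. Let A and B be finite sets of chords of S such that: any two distinct chords of A are disjoint (as subsets of the plane), any two distinct chords of B are disjoint, and the set of all endpoints of chords of A equals the set of all endpoints of chords of B. Then either A = B, or there exist chords a₁, a₂ ∈ A and b₁, b₂ ∈ B and points p₁, p₂ ∈ S such that: a₁ and b₁ share the endpoint p₁ and have distinct other endpoints q(a₁) ≠ q(b₁) with det(q(b₁) − p₁, q(a₁) − p₁) > 0 (i.e., b₁ is to the right of a₁ at p₁), and a₂ and b₂ share the endpoint p₂ and have distinct other endpoints q(a₂) ≠ q(b₂) with det(q(b₂) − p₂, q(a₂) − p₂) < 0 (i.e., b₂ is to the left of a₂ at p₂). -/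
/-!
For `q ≠ p` on the unit circle let `halfAngleCot p q = cot (θ / 2)`, where `θ ∈ (0, 2π)` is the
counterclockwise angle from `p` to `q`. At a common endpoint `p`, a chord `pq'` lies to the right
of `pq` exactly when `halfAngleCot p q' > halfAngleCot p q`. Since `halfAngleCot q p =
-halfAngleCot p q`, summing `halfAngleCot p (partner p)` over all endpoints of a family of disjoint
chords gives `0`. So for `A` and `B` with the same endpoints the differences
`halfAngleCot p (partner B p) - halfAngleCot p (partner A p)` sum to `0`: either all vanish, and
then `A = B`, or one is positive and another negative.
-/

/-- The standard determinant of two plane vectors. -/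
def det2 (u v : ℝ × ℝ) : ℝ := u.1 * v.2 - u.2 * v.1

/-- The closed straight segment spanned by an unordered pair of points. -/
def chordSeg : Sym2 (ℝ × ℝ) → Set (ℝ × ℝ) :=
  Sym2.lift ⟨fun p q => segment ℝ p q, fun p q => segment_symm ℝ p q⟩

/-- The unit circle in the plane. -/
def unitCircle : Set (ℝ × ℝ) := {p : ℝ × ℝ | p.1 ^ 2 + p.2 ^ 2 = 1}

lemma mem_unitCircle {p : ℝ × ℝ} : p ∈ unitCircle ↔ p.1 ^ 2 + p.2 ^ 2 = 1 := Iff.rfl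

/-- On the unit circle `det2 p q = sin θ` and `p.1 * q.1 + p.2 * q.2 = cos θ`, so this is
`sin θ / (1 - cos θ) = cot (θ / 2)`. -/
noncomputable def halfAngleCot (p q : ℝ × ℝ) : ℝ :=
  det2 p q / (1 - (p.1 * q.1 + p.2 * q.2))

lemma det2_swap (u v : ℝ × ℝ) : det2 v u = -det2 u v := by
  rw [det2, det2]
  ring

lemma halfAngleCot_swap (p q : ℝ × ℝ) : halfAngleCot q p = -halfAngleCot p q := by
  rw [halfAngleCot, halfAngleCot, ← neg_div, det2_swap, mul_comm q.1, mul_comm q.2]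

lemma one_sub_dot_pos {p q : ℝ × ℝ} (hp : p ∈ unitCircle) (hq : q ∈ unitCircle)
    (hpq : p ≠ q) : 0 < 1 - (p.1 * q.1 + p.2 * q.2) := by
  rw [mem_unitCircle] at hp hq
  by_contra! h
  apply hpq
  ext <;> nlinarith [sq_nonneg (p.1 - q.1), sq_nonneg (p.2 - q.2)]

section UnitCircle

variable {p q r : ℝ × ℝ} (hp : p ∈ unitCircle) (hq : q ∈ unitCircle) (hr : r ∈ unitCircle)
  (hpq : p ≠ q) (hpr : p ≠ r)
include hp hq hr hpq hpr

lemma det2_sub_sub_eq_mul_halfAngleCot_sub :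
    det2 (q - p) (r - p) = (1 - (p.1 * q.1 + p.2 * q.2)) * (1 - (p.1 * r.1 + p.2 * r.2)) *
      (halfAngleCot p q - halfAngleCot p r) := by
  have hq' := div_mul_cancel₀ (det2 p q) (one_sub_dot_pos hp hq hpq).ne'
  have hr' := div_mul_cancel₀ (det2 p r) (one_sub_dot_pos hp hr hpr).ne'
  rw [mem_unitCircle] at hp
  rw [← halfAngleCot] at hq' hr'
  simp only [det2, Prod.fst_sub, Prod.snd_sub] at hq' hr' ⊢
  linear_combination (q.2 * r.1 - q.1 * r.2) * hp - (1 - (p.1 * r.1 + p.2 * r.2)) * hq' +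
    (1 - (p.1 * q.1 + p.2 * q.2)) * hr'

lemma det2_sub_sub_pos_iff :
    0 < det2 (q - p) (r - p) ↔ halfAngleCot p r < halfAngleCot p q := by
  rw [det2_sub_sub_eq_mul_halfAngleCot_sub hp hq hr hpq hpr, mul_pos_iff_of_pos_left
    (mul_pos (one_sub_dot_pos hp hq hpq) (one_sub_dot_pos hp hr hpr)), sub_pos]

lemma eq_of_halfAngleCot_eq (h : halfAngleCot p q = halfAngleCot p r) : q = r := by
  have hq' := (one_sub_dot_pos hp hq hpq).ne'
  have hr' := (one_sub_dot_pos hp hr hpr).ne'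
  rw [mem_unitCircle] at hp hq hr
  rw [halfAngleCot, halfAngleCot, div_eq_div_iff hq' hr', det2, det2] at h
  ext <;> grind

end UnitCircle

section Matching

variable {α : Type*}

def IsMatching (C : Finset (Sym2 α)) : Prop :=
  ∀ c ∈ C, ∀ c' ∈ C, ∀ x ∈ c, x ∈ c' → c = c'

open Classical in
/-- The other endpoint of the edge of `C` through `p`; junk value `p` if there is none. -/
noncomputable def partner (C : Finset (Sym2 α)) (p : α) : α :=
  if h : ∃ c ∈ C, p ∈ c then Sym2.Mem.other h.choose_spec.2 else p

variable {C D : Finset (Sym2 α)} {p : α}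

lemma mk_partner_mem (h : ∃ c ∈ C, p ∈ c) : s(p, partner C p) ∈ C := by
  rw [partner, dif_pos h, Sym2.other_spec h.choose_spec.2]
  exact h.choose_spec.1

lemma exists_mem_partner (h : ∃ c ∈ C, p ∈ c) : ∃ c ∈ C, partner C p ∈ c :=
  ⟨_, mk_partner_mem h, Sym2.mem_mk_right _ _⟩

lemma partner_ne (hC : ∀ c ∈ C, ¬ c.IsDiag) (h : ∃ c ∈ C, p ∈ c) : partner C p ≠ p :=
  fun he => hC _ (mk_partner_mem h) (Sym2.mk_isDiag_iff.mpr he.symm)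

lemma partner_mem {S : Set α} (hS : ∀ c ∈ C, ∀ x ∈ c, x ∈ S) (h : ∃ c ∈ C, p ∈ c) :
    partner C p ∈ S :=
  hS _ (mk_partner_mem h) _ (Sym2.mem_mk_right _ _)

namespace IsMatching

lemma partner_partner (hC : IsMatching C) (h : ∃ c ∈ C, p ∈ c) :
    partner C (partner C p) = p := by
  have he := hC _ (mk_partner_mem h) _ (mk_partner_mem (exists_mem_partner h)) _
    (Sym2.mem_mk_right _ _) (Sym2.mem_mk_left _ _)
  rw [Sym2.eq_swap] at he
  exact (Sym2.congr_right.mp he).symm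

lemma sum_partner_eq_zero {M : Type*} [AddCommGroup M] (hC : IsMatching C)
    (hCdiag : ∀ c ∈ C, ¬ c.IsDiag) {f : α → α → M} (hf : ∀ x y, f y x = -f x y)
    {P : Finset α} (hP : ∀ p, p ∈ P ↔ ∃ c ∈ C, p ∈ c) :
    ∑ p ∈ P, f p (partner C p) = 0 := by
  refine Finset.sum_involution (fun p _ => partner C p) (fun p hp => ?_)
    (fun p hp _ => partner_ne hCdiag ((hP p).1 hp))
    (fun p hp => (hP _).2 (exists_mem_partner ((hP p).1 hp)))
    (fun p hp => hC.partner_partner ((hP p).1 hp))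
  rw [hC.partner_partner ((hP p).1 hp), hf, neg_add_cancel]

lemma subset_of_mk_partner_mem (hC : IsMatching C)
    (h : ∀ p, (∃ c ∈ C, p ∈ c) → s(p, partner C p) ∈ D) : C ⊆ D := by
  intro c hc
  have hp : ∃ c' ∈ C, c.out.1 ∈ c' := ⟨c, hc, Sym2.out_fst_mem c⟩
  rw [hC c hc _ (mk_partner_mem hp) _ (Sym2.out_fst_mem c) (Sym2.mem_mk_left _ _)]
  exact h _ hp

lemma eq_of_partner_eq (hC : IsMatching C) (hD : IsMatching D)
    (hcov : ∀ p, (∃ c ∈ C, p ∈ c) ↔ ∃ c ∈ D, p ∈ c)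
    (h : ∀ p, (∃ c ∈ C, p ∈ c) → partner C p = partner D p) : C = D := by
  refine (hC.subset_of_mk_partner_mem fun p hp => ?_).antisymm
    (hD.subset_of_mk_partner_mem fun p hp => ?_)
  · rw [h p hp]
    exact mk_partner_mem ((hcov p).1 hp)
  · rw [← h p ((hcov p).2 hp)]
    exact mk_partner_mem ((hcov p).2 hp)

end IsMatching

end Matching

lemma mem_chordSeg {c : Sym2 (ℝ × ℝ)} {p : ℝ × ℝ} (h : p ∈ c) : p ∈ chordSeg c := by
  obtain ⟨q, rfl⟩ := Sym2.mem_iff_exists.mp h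
  exact left_mem_segment ℝ p q

lemma isMatching_of_disjoint_chordSeg {C : Finset (Sym2 (ℝ × ℝ))}
    (h : ∀ c ∈ C, ∀ c' ∈ C, c ≠ c' → chordSeg c ∩ chordSeg c' = ∅) :
    IsMatching C := by
  intro c hc c' hc' x hx hx'
  by_contra hne
  exact (h c hc c' hc' hne).subset ⟨mem_chordSeg hx, mem_chordSeg hx'⟩

section Chords

variable {A B : Finset (Sym2 (ℝ × ℝ))} {p : ℝ × ℝ}

lemma mem_unitCircle_and_partner (hA : ∀ c ∈ A, ¬ c.IsDiag ∧ ∀ p ∈ c, p ∈ unitCircle)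
    (hpA : ∃ c ∈ A, p ∈ c) :
    p ∈ unitCircle ∧ partner A p ∈ unitCircle ∧ p ≠ partner A p := by
  obtain ⟨c, hc, hpc⟩ := hpA
  exact ⟨(hA c hc).2 p hpc, partner_mem (fun c hc => (hA c hc).2) ⟨c, hc, hpc⟩,
    (partner_ne (fun c hc => (hA c hc).1) ⟨c, hc, hpc⟩).symm⟩

variable (hA : ∀ c ∈ A, ¬ c.IsDiag ∧ ∀ p ∈ c, p ∈ unitCircle)
  (hB : ∀ c ∈ B, ¬ c.IsDiag ∧ ∀ p ∈ c, p ∈ unitCircle)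
  (hpA : ∃ c ∈ A, p ∈ c) (hpB : ∃ c ∈ B, p ∈ c)
include hA hB hpA hpB

lemma partner_eq_of_halfAngleCot_eq
    (h : halfAngleCot p (partner A p) = halfAngleCot p (partner B p)) :
    partner A p = partner B p := by
  obtain ⟨hp, hqa, hpqa⟩ := mem_unitCircle_and_partner hA hpA
  obtain ⟨-, hqb, hpqb⟩ := mem_unitCircle_and_partner hB hpB
  exact eq_of_halfAngleCot_eq hp hqa hqb hpqa hpqb h

lemma exists_det2_pos_of_halfAngleCot_lt
    (h : halfAngleCot p (partner A p) < halfAngleCot p (partner B p)) :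
    ∃ qa qb, s(p, qa) ∈ A ∧ s(p, qb) ∈ B ∧ p ∈ unitCircle ∧ p ≠ qa ∧ p ≠ qb ∧ qa ≠ qb ∧
      0 < det2 (qb - p) (qa - p) := by
  obtain ⟨hp, hqa, hpqa⟩ := mem_unitCircle_and_partner hA hpA
  obtain ⟨-, hqb, hpqb⟩ := mem_unitCircle_and_partner hB hpB
  exact ⟨_, _, mk_partner_mem hpA, mk_partner_mem hpB, hp, hpqa, hpqb, ne_of_apply_ne _ h.ne,
    (det2_sub_sub_pos_iff hp hqb hqa hpqb hpqa).2 h⟩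

lemma exists_det2_neg_of_halfAngleCot_lt
    (h : halfAngleCot p (partner B p) < halfAngleCot p (partner A p)) :
    ∃ qa qb, s(p, qa) ∈ A ∧ s(p, qb) ∈ B ∧ p ∈ unitCircle ∧ p ≠ qa ∧ p ≠ qb ∧ qa ≠ qb ∧
      det2 (qb - p) (qa - p) < 0 := by
  obtain ⟨qb, qa, hb, ha, hp, hpqb, hpqa, hne, hdet⟩ :=
    exists_det2_pos_of_halfAngleCot_lt hB hA hpB hpA h
  exact ⟨qa, qb, ha, hb, hp, hpqa, hpqb, hne.symm, by rwa [← neg_pos, ← det2_swap]⟩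

end Chords

/-- For finite sets `A`, `B` of pairwise disjoint chords of the unit
circle with the same endpoint sets, either `A = B` or there are chords
`a₁, a₂ ∈ A`, `b₁, b₂ ∈ B` sharing endpoints `p₁`, `p₂` such that `b₁` is to the
right of `a₁` at `p₁` and `b₂` is to the left of `a₂` at `p₂`. -/
theorem stmt1 (A B : Finset (Sym2 (ℝ × ℝ)))
    (hA : ∀ c ∈ A, ¬ c.IsDiag ∧ ∀ p ∈ c, p ∈ unitCircle)
    (hB : ∀ c ∈ B, ¬ c.IsDiag ∧ ∀ p ∈ c, p ∈ unitCircle)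
    (hAdisj : ∀ c ∈ A, ∀ c' ∈ A, c ≠ c' → chordSeg c ∩ chordSeg c' = ∅)
    (hBdisj : ∀ c ∈ B, ∀ c' ∈ B, c ≠ c' → chordSeg c ∩ chordSeg c' = ∅)
    (hends : {p : ℝ × ℝ | ∃ c ∈ A, p ∈ c} = {p : ℝ × ℝ | ∃ c ∈ B, p ∈ c}) :
    A = B ∨
      ∃ a₁ ∈ A, ∃ b₁ ∈ B, ∃ a₂ ∈ A, ∃ b₂ ∈ B,
        ∃ p₁ p₂ qa₁ qb₁ qa₂ qb₂ : ℝ × ℝ,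
          p₁ ∈ unitCircle ∧ p₂ ∈ unitCircle ∧
          a₁ = s(p₁, qa₁) ∧ b₁ = s(p₁, qb₁) ∧ p₁ ≠ qa₁ ∧ p₁ ≠ qb₁ ∧
            qa₁ ≠ qb₁ ∧ 0 < det2 (qb₁ - p₁) (qa₁ - p₁) ∧
          a₂ = s(p₂, qa₂) ∧ b₂ = s(p₂, qb₂) ∧ p₂ ≠ qa₂ ∧ p₂ ≠ qb₂ ∧
            qa₂ ≠ qb₂ ∧ det2 (qb₂ - p₂) (qa₂ - p₂) < 0 := by
  classical
  set P := A.biUnion Sym2.toFinset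
  have hPA : ∀ p, p ∈ P ↔ ∃ c ∈ A, p ∈ c := by simp [P]
  have hPB : ∀ p, p ∈ P ↔ ∃ c ∈ B, p ∈ c := fun p => (hPA p).trans (Set.ext_iff.mp hends p)
  have hAm := isMatching_of_disjoint_chordSeg hAdisj
  have hBm := isMatching_of_disjoint_chordSeg hBdisj
  set d := fun p => halfAngleCot p (partner B p) - halfAngleCot p (partner A p)
  by_cases hsame : ∀ p ∈ P, d p = 0
  · refine .inl (hAm.eq_of_partner_eq hBm (fun p => (hPA p).symm.trans (hPB p)) fun p hp => ?_)
    have hp' := (hPA p).2 hp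
    exact partner_eq_of_halfAngleCot_eq hA hB hp ((hPB p).1 hp')
      (sub_eq_zero.mp (hsame p hp')).symm
  obtain ⟨p₀, hp₀, hd₀⟩ := not_forall₂.mp hsame
  have hsum : ∑ p ∈ P, d p = 0 := by
    rw [Finset.sum_sub_distrib,
      hBm.sum_partner_eq_zero (fun c hc => (hB c hc).1) halfAngleCot_swap hPB,
      hAm.sum_partner_eq_zero (fun c hc => (hA c hc).1) halfAngleCot_swap hPA, sub_zero]
  obtain ⟨p₁, hp₁, hpos⟩ :=
    Finset.exists_pos_of_sum_zero_of_exists_nonzero d hsum ⟨p₀, hp₀, hd₀⟩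
  obtain ⟨p₂, hp₂, hneg⟩ := Finset.exists_pos_of_sum_zero_of_exists_nonzero (-d)
    (by simp [hsum]) ⟨p₀, hp₀, neg_ne_zero.mpr hd₀⟩
  obtain ⟨qa₁, qb₁, ha₁, hb₁, hp₁c, hpa₁, hpb₁, hab₁, hdet₁⟩ :=
    exists_det2_pos_of_halfAngleCot_lt hA hB ((hPA p₁).1 hp₁) ((hPB p₁).1 hp₁) (sub_pos.mp hpos)
  obtain ⟨qa₂, qb₂, ha₂, hb₂, hp₂c, hpa₂, hpb₂, hab₂, hdet₂⟩ :=
    exists_det2_neg_of_halfAngleCot_lt hA hB ((hPA p₂).1 hp₂) ((hPB p₂).1 hp₂)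
      (by simpa [d] using hneg)
  exact .inr ⟨_, ha₁, _, hb₁, _, ha₂, _, hb₂, p₁, p₂, qa₁, qb₁, qa₂, qb₂, hp₁c, hp₂c,
    rfl, rfl, hpa₁, hpb₁, hab₁, hdet₁, rfl, rfl, hpa₂, hpb₂, hab₂, hdet₂⟩
end

section
/- Let T be a tree (a connected acyclic simple graph) on a finite nonempty vertex set V, and let c : V → Bool be a coloring of its vertices. Define v ∼ w if and only if c v = c w and there is a path in T from v to w all of whose vertices have color c v; this is an equivalence relation, and its classes are the maximal monochromatic connected blocks of T. Then there exists an enumeration v₁, …, vₙ of V such that: (1) for every k with 2 ≤ k ≤ n, the vertex v_k is adjacent in T to some v_j with j < k (i.e., the enumeration is a growing order of T), and (2) for every equivalence class C of ∼, the indices {k : v_k ∈ C} form a set of consecutive integers. -/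
/-!
Enumerate the vertices greedily, keeping the invariant that every block already met but not yet
exhausted occupies a final segment of the enumeration (so there is at most one such open block).
While an open block exists, a walk inside it from an enumerated vertex to a missing one leaves the
enumerated set along some edge, and the new endpoint of that edge is appended. Otherwise the new
endpoint of any edge leaving the enumerated set, which exists by connectedness, is appended.
-/

/-- `v` and `w` lie in the same maximal monochromatic connected block of the
graph `T` with vertex coloring `c`: they have the same color and are joined by
a walk all of whose vertices have that color. -/
def sameBlock {V : Type*} (T : SimpleGraph V) (c : V → Bool) (v w : V) : Prop :=
  c v = c w ∧ ∃ p : T.Walk v w, ∀ u ∈ p.support, c u = c v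

open SimpleGraph

section sameBlock

variable {V : Type*} {T : SimpleGraph V} {c : V → Bool}

theorem sameBlock_equivalence : Equivalence (sameBlock T c) where
  refl _ := ⟨rfl, .nil, by simp⟩
  symm := by
    rintro v w ⟨hc, p, hp⟩
    exact ⟨hc.symm, p.reverse, fun u hu => (hp u (by simpa using hu)).trans hc⟩
  trans := by
    rintro u v w ⟨hc₁, p, hp⟩ ⟨hc₂, q, hq⟩
    refine ⟨hc₁.trans hc₂, p.append q, fun x hx => ?_⟩
    rcases (p.mem_support_append_iff q).mp hx with hx | hx
    · exact hp x hx
    · exact (hq x hx).trans hc₁.symm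

theorem exists_walk_forall_sameBlock_of_sameBlock {u v : V} (h : sameBlock T c u v) :
    ∃ p : T.Walk u v, ∀ x ∈ p.support, sameBlock T c u x := by
  classical
  obtain ⟨-, p, hp⟩ := h
  exact ⟨p, fun x hx => ⟨(hp x hx).symm, p.takeUntil x hx,
    fun y hy => hp y (p.support_takeUntil_subset_support hx hy)⟩⟩

end sameBlock

section GrowingOrder

variable {V : Type*} {G : SimpleGraph V} {r : V → V → Prop} {f : ℕ → V} {n : ℕ}

structure IsGrowingBlockPrefix (G : SimpleGraph V) (r : V → V → Prop) (f : ℕ → V) (n : ℕ) :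
    Prop where
  injOn : Set.InjOn f (Set.Iio n)
  exists_adj : ∀ k < n, 0 < k → ∃ j < k, G.Adj (f j) (f k)
  interval : ∀ i j k, i ≤ j → j ≤ k → k < n → r (f i) (f k) → r (f i) (f j)
  suffix_of_open :
    ∀ i < n, ∀ y ∉ f '' Set.Iio n, r (f i) y → ∀ j, i ≤ j → j < n → r (f i) (f j)

theorem isGrowingBlockPrefix_one (hr : Equivalence r) (v : V) :
    IsGrowingBlockPrefix G r (fun _ => v) 1 where
  injOn _ _ _ _ _ := by simp_all
  exists_adj k hk hk0 := by omega
  interval _ _ _ _ _ _ _ := hr.refl v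
  suffix_of_open _ _ _ _ _ _ _ _ := hr.refl v

theorem IsGrowingBlockPrefix.update (hr : Equivalence r) (h : IsGrowingBlockPrefix G r f n)
    {b : V} (hb : b ∉ f '' Set.Iio n) (hadj : ∃ j < n, G.Adj (f j) b)
    (hopen : ∀ i < n, (∃ y ∉ f '' Set.Iio n, r (f i) y) → r (f i) b) :
    IsGrowingBlockPrefix G r (Function.update f n b) (n + 1) := by
  set g := Function.update f n b
  have hg : ∀ k < n, g k = f k := fun k hk => Function.update_of_ne hk.ne _ _
  have hgn : g n = b := Function.update_self _ _ _
  have hIio : Set.Iio (n + 1) = insert n (Set.Iio n) := by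
    rw [Set.Iio_add_one_eq_Iic, Set.Iio_insert]
  have himage : g '' Set.Iio n = f '' Set.Iio n := Set.image_congr hg
  have hlt : ∀ {k}, k < n + 1 → k < n ∨ k = n := fun hk => by omega
  refine ⟨?_, ?_, ?_, ?_⟩
  · rw [hIio, Set.injOn_insert (s := Set.Iio n) (lt_irrefl n), himage, hgn]
    exact ⟨h.injOn.congr fun k hk => (hg k hk).symm, hb⟩
  · intro k hk hk0
    rcases hlt hk with hk | rfl
    · obtain ⟨j, hjk, hj⟩ := h.exists_adj k hk hk0
      exact ⟨j, hjk, by rwa [hg j (hjk.trans hk), hg k hk]⟩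
    · obtain ⟨j, hj, hjb⟩ := hadj
      exact ⟨j, hj, by rwa [hg j hj, hgn]⟩
  · intro i j k hij hjk hk hik
    rcases hlt hk with hk | rfl
    · rw [hg i (by omega), hg j (by omega), hg k hk] at *
      exact h.interval i j k hij hjk hk hik
    · rcases hlt (Nat.lt_succ_of_le hjk) with hj | rfl
      · rw [hg i (by omega), hg j hj] at *
        rw [hgn] at hik
        exact h.suffix_of_open i (by omega) b hb hik j hij hj
      · exact hik
  · intro i hi y hy hiy j hij hj
    rw [hIio, Set.image_insert_eq, himage, hgn, Set.mem_insert_iff, not_or] at hy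
    rcases hlt hi with hi | rfl
    · rw [hg i hi] at *
      rcases hlt hj with hj | rfl
      · rw [hg j hj]
        exact h.suffix_of_open i hi y hy.2 hiy j hij hj
      · rw [hgn]
        exact hopen i hi ⟨y, hy.2, hiy⟩
    · rw [le_antisymm hij (Nat.lt_succ_iff.mp hj)]
      exact hr.refl _

theorem IsGrowingBlockPrefix.exists_update (hG : G.Connected) (hr : Equivalence r)
    (hconn : ∀ ⦃u v⦄, r u v → ∃ p : G.Walk u v, ∀ x ∈ p.support, r u x)
    (h : IsGrowingBlockPrefix G r f n) (hn : 0 < n) (hy : ∃ y, y ∉ f '' Set.Iio n) :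
    ∃ b ∉ f '' Set.Iio n, (∃ j < n, G.Adj (f j) b) ∧
      ∀ i < n, (∃ y ∉ f '' Set.Iio n, r (f i) y) → r (f i) b := by
  have exit {u w : V} (p : G.Walk u w) (hu : u ∈ f '' Set.Iio n) (hw : w ∉ f '' Set.Iio n) :
      ∃ b ∉ f '' Set.Iio n, b ∈ p.support ∧ ∃ j < n, G.Adj (f j) b := by
    obtain ⟨d, hd, ⟨j, hj, hjd⟩, hdS⟩ := p.exists_boundary_dart _ hu hw
    exact ⟨d.snd, hdS, p.dart_snd_mem_support_of_mem_darts hd, j, hj, hjd ▸ d.adj⟩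
  by_cases hopen : ∃ i < n, ∃ y ∉ f '' Set.Iio n, r (f i) y
  · obtain ⟨i, hi, y, hy, hiy⟩ := hopen
    obtain ⟨p, hp⟩ := hconn hiy
    obtain ⟨b, hb, hbp, hadj⟩ := exit p ⟨i, hi, rfl⟩ hy
    refine ⟨b, hb, hadj, fun i' hi' ⟨y', hy', hiy'⟩ => ?_⟩
    -- both open classes contain the last enumerated vertex, hence coincide
    have hlast : r (f i') (f (n - 1)) ∧ r (f i) (f (n - 1)) :=
      ⟨h.suffix_of_open i' hi' y' hy' hiy' _ (by omega) (by omega),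
        h.suffix_of_open i hi y hy hiy _ (by omega) (by omega)⟩
    exact hr.trans (hr.trans hlast.1 (hr.symm hlast.2)) (hp b hbp)
  · push Not at hopen
    obtain ⟨y, hy⟩ := hy
    obtain ⟨b, hb, -, hadj⟩ := exit (hG.preconnected (f 0) y).some ⟨0, hn, rfl⟩ hy
    exact ⟨b, hb, hadj, fun i hi ⟨y, hy, hiy⟩ => absurd hiy (hopen i hi y hy)⟩

theorem exists_isGrowingBlockPrefix [Fintype V] (hG : G.Connected) (hr : Equivalence r)
    (hconn : ∀ ⦃u v⦄, r u v → ∃ p : G.Walk u v, ∀ x ∈ p.support, r u x)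
    (n : ℕ) (hn : 1 ≤ n) (hnV : n ≤ Fintype.card V) : ∃ f, IsGrowingBlockPrefix G r f n := by
  induction n, hn using Nat.le_induction with
  | base => exact ⟨_, isGrowingBlockPrefix_one hr hG.nonempty.some⟩
  | succ n hn ih =>
    obtain ⟨f, hf⟩ := ih (by omega)
    have hy : ∃ y, y ∉ f '' Set.Iio n := by
      by_contra! hall
      have : Function.Surjective fun k : Fin n => f k := fun y => by
        obtain ⟨k, hk, rfl⟩ := hall y
        exact ⟨⟨k, hk⟩, rfl⟩
      have := Fintype.card_le_of_surjective _ this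
      simp only [Fintype.card_fin] at this
      omega
    obtain ⟨b, hb, hadj, hopen⟩ := hf.exists_update hG hr hconn (by omega) hy
    exact ⟨_, hf.update hr hb hadj hopen⟩

theorem exists_growing_equiv_of_connected_classes [Fintype V] (hG : G.Connected)
    (hr : Equivalence r) (hconn : ∀ ⦃u v⦄, r u v → ∃ p : G.Walk u v, ∀ x ∈ p.support, r u x) :
    ∃ e : Fin (Fintype.card V) ≃ V,
      (∀ k : Fin (Fintype.card V), 0 < (k : ℕ) →
        ∃ j : Fin (Fintype.card V), (j : ℕ) < (k : ℕ) ∧ G.Adj (e j) (e k)) ∧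
      (∀ j k l : Fin (Fintype.card V), j ≤ k → k ≤ l → r (e j) (e l) → r (e j) (e k)) := by
  have := hG.nonempty
  obtain ⟨f, hf⟩ := exists_isGrowingBlockPrefix hG hr hconn _ Fintype.card_pos le_rfl
  have hinj : Function.Injective fun k : Fin (Fintype.card V) => f k :=
    fun i j hij => Fin.ext (hf.injOn i.2 j.2 hij)
  refine ⟨.ofBijective _ ((Fintype.bijective_iff_injective_and_card _).mpr
    ⟨hinj, Fintype.card_fin _⟩), fun k hk => ?_, fun j k l hjk hkl => ?_⟩
  · obtain ⟨j, hjk, hadj⟩ := hf.exists_adj k k.2 hk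
    exact ⟨⟨j, hjk.trans k.2⟩, hjk, hadj⟩
  · exact hf.interval j k l hjk hkl l.2

end GrowingOrder

theorem stmt3_general {V : Type*} [Fintype V]
    (T : SimpleGraph V) (hT : T.IsTree) (c : V → Bool) :
    Equivalence (sameBlock T c) ∧
    ∃ e : Fin (Fintype.card V) ≃ V,
      (∀ k : Fin (Fintype.card V), 0 < (k : ℕ) →
        ∃ j : Fin (Fintype.card V), (j : ℕ) < (k : ℕ) ∧ T.Adj (e j) (e k)) ∧
      (∀ j k l : Fin (Fintype.card V), j ≤ k → k ≤ l →
        sameBlock T c (e j) (e l) → sameBlock T c (e j) (e k)) :=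
  ⟨sameBlock_equivalence, exists_growing_equiv_of_connected_classes hT.connected
    sameBlock_equivalence fun _ _ => exists_walk_forall_sameBlock_of_sameBlock⟩

/-- `sameBlock` is an equivalence relation, and every tree with a
`Bool`-coloring of its vertices admits a growing order (each vertex after the
first is adjacent to an earlier one) in which every maximal monochromatic
connected block occupies a set of consecutive indices. -/
theorem stmt3 {V : Type*} [Fintype V] [Nonempty V]
    (T : SimpleGraph V) (hT : T.IsTree) (c : V → Bool) :
    Equivalence (sameBlock T c) ∧
    ∃ e : Fin (Fintype.card V) ≃ V,
      (∀ k : Fin (Fintype.card V), 0 < (k : ℕ) →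
        ∃ j : Fin (Fintype.card V), (j : ℕ) < (k : ℕ) ∧ T.Adj (e j) (e k)) ∧
      (∀ j k l : Fin (Fintype.card V), j ≤ k → k ≤ l →
        sameBlock T c (e j) (e l) → sameBlock T c (e j) (e k)) :=
  stmt3_general T hT c
end
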